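/- arXiv:math/0412243 — 9 statements merged into one kernel-verified Lean document; each statement's English description precedes it below -/
import Mathlib

section
/- Let E be a row-finite directed graph and let →₁ and → be the relations on the free abelian monoid F_E on E⁰ defined from the graph relations. If α = α₁ + α₂ in F_E and α → β, then β can be written as β = β₁ + β₂ with α₁ → β₁ and α₂ → β₂. -/
/-- A row-finite directed graph: vertex set `V`, edge set `Edge`,
source and range maps, with every vertex emitting finitely many edges. -/
structure RFGraph where
  V : Type
  Edge : Type
  s : Edge → V
  r : Edge → V
  rowFinite : ∀ v : V, {e : Edge | s e = v}.Finite

namespace RFGraph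

/-- The free abelian monoid on the vertex set. -/
abbrev F (G : RFGraph) : Type := G.V →₀ ℕ

/-- `v` emits at least one edge. -/
def emits (G : RFGraph) (v : G.V) : Prop := ∃ e : G.Edge, G.s e = v

/-- `𝐫(v) = Σ_{e ∈ s⁻¹(v)} r(e)` in the free abelian monoid. -/
noncomputable def rr (G : RFGraph) (v : G.V) : G.F :=
  ∑ e ∈ (G.rowFinite v).toFinset, Finsupp.single (G.r e) 1

/-- The one-step relation `→₁`: `α →₁ β` iff `α = x + α'` for a vertex `x`
emitting at least one edge, and `β = 𝐫(x) + α'`. -/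
def step (G : RFGraph) (α β : G.F) : Prop :=
  ∃ (x : G.V) (α' : G.F), G.emits x ∧ α = Finsupp.single x 1 + α' ∧ β = G.rr x + α'

/-- The reflexive-transitive closure `→` of `→₁`. -/
def steps (G : RFGraph) : G.F → G.F → Prop := Relation.ReflTransGen G.step

/-- The additive congruence `∼` on `F_E` generated by `→₁`. -/
noncomputable def graphCon (G : RFGraph) : AddCon G.F := addConGen G.step

/-- The graph monoid `M_E = F_E/∼`. -/
abbrev M (G : RFGraph) : Type := G.graphCon.Quotient

/-- The class `a_v` of a vertex `v` in the graph monoid. -/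
noncomputable def av (G : RFGraph) (v : G.V) : G.M := G.graphCon.mk' (Finsupp.single v 1)

end RFGraph

/-! A single step rewrites one occurrence of a vertex `x` in `α₁ + α₂`; that occurrence lies in
`α₁` or in `α₂`, so the step is a step of one summand with the other carried along unchanged.
Induction along `α → β` then splits the whole chain. -/

theorem Relation.ReflTransGen.exists_add_of_step_split {M : Type*} [Add M] {r : M → M → Prop}
    (hr : ∀ a₁ a₂ b, r (a₁ + a₂) b →
      (∃ b₁, b = b₁ + a₂ ∧ r a₁ b₁) ∨ (∃ b₂, b = a₁ + b₂ ∧ r a₂ b₂))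
    {a₁ a₂ b : M} (h : Relation.ReflTransGen r (a₁ + a₂) b) :
    ∃ b₁ b₂, b = b₁ + b₂ ∧ Relation.ReflTransGen r a₁ b₁ ∧ Relation.ReflTransGen r a₂ b₂ := by
  induction h with
  | refl => exact ⟨a₁, a₂, rfl, .refl, .refl⟩
  | tail _ hstep ih =>
    obtain ⟨b₁, b₂, rfl, h₁, h₂⟩ := ih
    rcases hr b₁ b₂ _ hstep with ⟨c₁, rfl, hc₁⟩ | ⟨c₂, rfl, hc₂⟩
    · exact ⟨c₁, b₂, rfl, h₁.tail hc₁, h₂⟩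
    · exact ⟨b₁, c₂, rfl, h₁, h₂.tail hc₂⟩

namespace RFGraph

variable (G : RFGraph)

theorem exists_step_of_single_le {x : G.V} (hx : G.emits x) {α' α₁ α₂ : G.F}
    (hle : Finsupp.single x 1 ≤ α₁) (heq : Finsupp.single x 1 + α' = α₁ + α₂) :
    ∃ β₁, G.rr x + α' = β₁ + α₂ ∧ G.step α₁ β₁ := by
  obtain ⟨γ, rfl⟩ := le_iff_exists_add.mp hle
  have hα' : α' = γ + α₂ := add_left_cancel (heq.trans (add_assoc _ _ _))
  exact ⟨G.rr x + γ, by rw [hα', add_assoc], x, γ, hx, rfl, rfl⟩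

theorem step_add_split {α₁ α₂ β : G.F} (h : G.step (α₁ + α₂) β) :
    (∃ β₁, β = β₁ + α₂ ∧ G.step α₁ β₁) ∨ (∃ β₂, β = α₁ + β₂ ∧ G.step α₂ β₂) := by
  obtain ⟨x, α', hx, heq, rfl⟩ := h
  have hcount : 1 ≤ α₁ x + α₂ x := by
    have := congrArg (· x) heq
    simp only [Finsupp.add_apply, Finsupp.single_eq_same] at this
    omega
  rcases le_or_gt 1 (α₁ x) with h₁ | h₁
  · exact .inl (G.exists_step_of_single_le hx (Finsupp.single_le_iff.mpr h₁) heq.symm)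
  · obtain ⟨β₂, hβ, hstep⟩ := G.exists_step_of_single_le hx (α₂ := α₁)
      (Finsupp.single_le_iff.mpr (by omega)) (heq.symm.trans (add_comm _ _))
    exact .inr ⟨β₂, hβ.trans (add_comm _ _), hstep⟩

end RFGraph

/-- If `α = α₁ + α₂` in `F_E` and `α → β`, then `β` can be written as
`β = β₁ + β₂` with `α₁ → β₁` and `α₂ → β₂`. -/
theorem stmt0 (G : RFGraph) (α α₁ α₂ β : G.F)
    (hα : α = α₁ + α₂) (h : G.steps α β) :
    ∃ β₁ β₂ : G.F, β = β₁ + β₂ ∧ G.steps α₁ β₁ ∧ G.steps α₂ β₂ := by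
  subst hα
  exact Relation.ReflTransGen.exists_add_of_step_split (fun _ _ _ ↦ G.step_add_split) h
end

section
/- Let E be a row-finite directed graph, let →₁ and → be the relations on the free abelian monoid F_E on E⁰ defined from the graph relations, and let ∼ be the congruence on F_E generated by →₁. For nonzero α, β ∈ F_E, one has α ∼ β if and only if there exists γ ∈ F_E with α → γ and β → γ. -/
/-!
Expanding two different vertices in either order leads to the same element, so `→₁` is
strongly confluent and joinability under `→` is an equivalence relation. Being compatible with
addition, joinability is then a congruence containing `→₁`, hence contains `∼`; conversely `→`
is contained in `∼`.
-/

theorem Finsupp.exists_eq_single_add_of_single_add_eq {ι : Type*} {x y : ι} {a b : ι →₀ ℕ}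
    (hxy : x ≠ y) (h : single x 1 + a = single y 1 + b) :
    ∃ c, a = single y 1 + c ∧ b = single x 1 + c := by
  have hay : a y = 1 + b y := by simpa [single_apply, hxy] using congrArg (· y) h
  obtain ⟨c, rfl⟩ := exists_add_of_le (single_le_iff.mpr (by omega) : single y 1 ≤ a)
  refine ⟨c, rfl, add_left_cancel (a := single y 1) ?_⟩
  rw [← h, add_left_comm]

namespace RFGraph

variable (G : RFGraph)

lemma step_add_right {a b : G.F} (h : G.step a b) (c : G.F) : G.step (a + c) (b + c) := by
  obtain ⟨x, a', hx, rfl, rfl⟩ := h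
  exact ⟨x, a' + c, hx, add_assoc .., add_assoc ..⟩

lemma steps_add_right {a b : G.F} (h : G.steps a b) (c : G.F) : G.steps (a + c) (b + c) := by
  induction h with
  | refl => exact .refl
  | tail _ hstep ih => exact ih.tail (G.step_add_right hstep c)

lemma steps_add {a b c d : G.F} (hab : G.steps a b) (hcd : G.steps c d) :
    G.steps (a + c) (b + d) := by
  refine (G.steps_add_right hab c).trans ?_
  rw [add_comm b, add_comm b]
  exact G.steps_add_right hcd b

lemma step_strongly_confluent {a b c : G.F} (hab : G.step a b) (hac : G.step a c) :
    ∃ d, Relation.ReflGen G.step b d ∧ G.steps c d := by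
  obtain ⟨x, a', hx, rfl, rfl⟩ := hab
  obtain ⟨y, a'', hy, hxy, rfl⟩ := hac
  by_cases hv : x = y
  · subst hv
    obtain rfl := add_left_cancel hxy
    exact ⟨_, .refl, .refl⟩
  obtain ⟨c, rfl, rfl⟩ := Finsupp.exists_eq_single_add_of_single_add_eq hv hxy
  refine ⟨G.rr x + G.rr y + c, .single ⟨y, G.rr x + c, hy, ?_, ?_⟩,
    .single ⟨x, G.rr y + c, hx, ?_, ?_⟩⟩
  all_goals abel

noncomputable def joinCon : AddCon G.F where
  r := Relation.Join G.steps
  iseqv := Relation.equivalence_join_reflTransGen fun _ _ _ => G.step_strongly_confluent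
  add' := fun ⟨e, hae, hbe⟩ ⟨f, hcf, hdf⟩ => ⟨e + f, G.steps_add hae hcf, G.steps_add hbe hdf⟩

lemma graphCon_le_joinCon : G.graphCon ≤ G.joinCon :=
  AddCon.addConGen_le.mpr fun _ b h => ⟨b, .single h, .refl⟩

lemma graphCon_of_steps {a b : G.F} (h : G.steps a b) : G.graphCon a b := by
  induction h with
  | refl => exact G.graphCon.refl _
  | tail _ hstep ih => exact ih.trans (AddConGen.Rel.of _ _ hstep)

end RFGraph

theorem stmt1_general (G : RFGraph) (α β : G.F) :
    G.graphCon α β ↔ ∃ γ : G.F, G.steps α γ ∧ G.steps β γ :=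
  ⟨fun h => G.graphCon_le_joinCon h,
    fun ⟨_, hα, hβ⟩ => (G.graphCon_of_steps hα).trans (G.graphCon_of_steps hβ).symm⟩

/-- For nonzero `α, β ∈ F_E`, `α ∼ β` iff there is `γ` with
`α → γ` and `β → γ`. -/
theorem stmt1 (G : RFGraph) (α β : G.F) (hα : α ≠ 0) (hβ : β ≠ 0) :
    G.graphCon α β ↔ ∃ γ : G.F, G.steps α γ ∧ G.steps β γ :=
  stmt1_general G α β
end

section
/- Let E be a row-finite directed graph, let G be the Grothendieck group (group completion) of the graph monoid M_E, and let φ : M_E → G be the canonical map. Then G is unperforated with respect to the positive cone φ(M_E): for every g ∈ G and every positive integer n, if n·g ∈ φ(M_E) then g ∈ φ(M_E). -/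
/-!
Any group completion of `M_E` is isomorphic, compatibly with the canonical maps, to the concrete
model `K₀ = ℤ^(V) / T(ℤ^(V))`, where `T e_v = v - 𝐫(v)` for emitting `v` and `T e_v = 0` for
sinks; the positive cone is the image of `ℕ^(V)`. Every column of `T` has diagonal entry at most
`1` and nonpositive entries elsewhere, so `(T r)_v ≤ r_v` whenever `r ≥ 0`.

Suppose `n ξ ≡ α` with `α ≥ 0`, say `α - n ξ = T u`, and divide `u = n q + r` with `0 ≤ r < n`
coordinatewise. Then `θ = ξ + T q ≡ ξ` and `n θ = α - T r > -n`, so `θ ≥ 0`.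
-/

def RangeUnperforated {M Γ : Type*} [AddCommMonoid M] [AddCommMonoid Γ] (φ : M →+ Γ) : Prop :=
  ∀ (g : Γ) (n : ℕ), 0 < n → n • g ∈ Set.range φ → g ∈ Set.range φ

theorem RangeUnperforated.of_comp_eq {M Γ K : Type*} [AddCommMonoid M] [AddCommMonoid Γ]
    [AddCommMonoid K] {φ : M →+ Γ} {κ : M →+ K} (hκ : RangeUnperforated κ) (ψ : Γ →+ K)
    (ρ : K →+ Γ) (hψ : ψ.comp φ = κ) (hρψ : ρ.comp ψ = .id Γ) : RangeUnperforated φ := by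
  have hρ (x : Γ) : ρ (ψ x) = x := DFunLike.congr_fun hρψ x
  rintro g n hn ⟨m, hm⟩
  obtain ⟨m', hm'⟩ := hκ (ψ g) n hn ⟨m, by rw [← hψ, AddMonoidHom.comp_apply, hm, map_nsmul]⟩
  refine ⟨m', ?_⟩
  rw [← hρ g, ← hm', ← hψ, AddMonoidHom.comp_apply, hρ]

theorem Finsupp.exists_eq_nsmul_add {ι : Type*} (u : ι →₀ ℤ) {n : ℕ} (hn : 0 < n) :
    ∃ q r : ι →₀ ℤ, u = n • q + r ∧ ∀ x, 0 ≤ r x ∧ r x < n := by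
  refine ⟨u.mapRange (· / (n : ℤ)) (Int.zero_ediv _), u.mapRange (· % (n : ℤ)) (Int.zero_emod _),
    ?_, fun x => ⟨Int.emod_nonneg _ (by omega), Int.emod_lt_of_pos _ (by omega)⟩⟩
  ext x
  simp [Int.mul_ediv_add_emod]

namespace RFGraph

variable (G : RFGraph)

noncomputable def castInt : G.F →+ (G.V →₀ ℤ) :=
  Finsupp.mapRange.addMonoidHom (Nat.castAddMonoidHom ℤ)

@[simp]
theorem castInt_apply (α : G.F) (v : G.V) : G.castInt α v = α v := rfl

theorem exists_castInt_eq_of_nonneg {θ : G.V →₀ ℤ} (hθ : ∀ v, 0 ≤ θ v) :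
    ∃ α : G.F, G.castInt α = θ :=
  ⟨θ.mapRange Int.toNat Int.toNat_zero, by ext v; simp [hθ v]⟩

open Classical in
noncomputable def relation (v : G.V) : G.V →₀ ℤ :=
  if G.emits v then G.castInt (Finsupp.single v 1) - G.castInt (G.rr v) else 0

theorem relation_apply_le (x v : G.V) : G.relation x v ≤ Finsupp.single x 1 v := by
  classical
  unfold relation
  split_ifs
  · simp [Finsupp.single_apply]
  · exact Finsupp.single_nonneg.2 zero_le_one v

noncomputable def relationHom : (G.V →₀ ℤ) →+ (G.V →₀ ℤ) :=
  Finsupp.liftAddHom fun v => zmultiplesHom _ (G.relation v)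

@[simp]
theorem relationHom_single_one (v : G.V) : G.relationHom (Finsupp.single v 1) = G.relation v := by
  simp [relationHom]

theorem relationHom_apply_le {r : G.V →₀ ℤ} (hr : ∀ x, 0 ≤ r x) (v : G.V) :
    G.relationHom r v ≤ r v := by
  classical
  calc G.relationHom r v = ∑ x ∈ r.support, r x * G.relation x v := by
        simp [relationHom, Finsupp.liftAddHom_apply, Finsupp.sum]
    _ ≤ ∑ x ∈ r.support, r x * Finsupp.single x 1 v :=
        Finset.sum_le_sum fun x _ => mul_le_mul_of_nonneg_left (G.relation_apply_le x v) (hr x)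
    _ = r v := by simp [Finsupp.single_apply, eq_comm]

noncomputable def relations : AddSubgroup (G.V →₀ ℤ) := G.relationHom.range

abbrev K0 : Type := (G.V →₀ ℤ) ⧸ G.relations

theorem castInt_sub_mem_relations_of_step {α β : G.F} (h : G.step α β) :
    G.castInt α - G.castInt β ∈ G.relations := by
  obtain ⟨x, α', hx, rfl, rfl⟩ := h
  refine ⟨Finsupp.single x 1, ?_⟩
  simp [relation, hx]

noncomputable def toK0 : G.M →+ G.K0 :=
  G.graphCon.lift ((QuotientAddGroup.mk' G.relations).comp G.castInt) <|
    AddCon.addConGen_le.2 fun _ _ h =>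
      (QuotientAddGroup.eq_iff_sub_mem).2 (G.castInt_sub_mem_relations_of_step h)

@[simp]
theorem toK0_coe (α : G.F) : G.toK0 α = (G.castInt α : G.K0) := rfl

theorem rangeUnperforated_toK0 : RangeUnperforated G.toK0 := by
  rintro ξ' n hn ⟨m, hm⟩
  obtain ⟨α, rfl⟩ := AddCon.mk'_surjective m
  obtain ⟨ξ, rfl⟩ := QuotientAddGroup.mk_surjective ξ'
  obtain ⟨u, hu⟩ : G.castInt α - n • ξ ∈ G.relations :=
    (QuotientAddGroup.eq_iff_sub_mem).1 (by simpa using hm)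
  obtain ⟨q, r, rfl, hr⟩ := u.exists_eq_nsmul_add hn
  set θ := ξ + G.relationHom q
  have hθ : n • θ = G.castInt α - G.relationHom r := by
    rw [map_add, map_nsmul] at hu
    rw [smul_add, eq_sub_iff_add_eq, add_assoc, hu]
    abel
  have hθ_nonneg (v : G.V) : 0 ≤ θ v := by
    have hθv : n * θ v = α v - G.relationHom r v := by simpa using congrArg (· v) hθ
    have hrv := G.relationHom_apply_le (fun x => (hr x).1) v
    have := (hr v).2
    have : (0 : ℤ) ≤ α v := by positivity
    nlinarith
  obtain ⟨α', hα'⟩ := G.exists_castInt_eq_of_nonneg hθ_nonneg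
  refine ⟨α', ?_⟩
  rw [toK0_coe, hα']
  exact (QuotientAddGroup.eq_iff_sub_mem).2 ⟨q, by simp [θ]⟩

variable {A : Type*} [AddCommGroup A]

noncomputable def extendInt (f : G.F →+ A) : (G.V →₀ ℤ) →+ A :=
  Finsupp.liftAddHom fun v => zmultiplesHom A (f (Finsupp.single v 1))

@[simp]
theorem extendInt_castInt (f : G.F →+ A) (α : G.F) : G.extendInt f (G.castInt α) = f α := by
  induction α using Finsupp.induction_linear with
  | zero => simp
  | add α β hα hβ => simp [hα, hβ]
  | single v k => simp [extendInt, castInt, ← map_nsmul]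

theorem coe_single_eq_coe_rr {v : G.V} (hv : G.emits v) :
    (Finsupp.single v 1 : G.M) = (G.rr v : G.M) :=
  (AddCon.eq _).2 <| AddConGen.Rel.of _ _ ⟨v, 0, hv, (add_zero _).symm, (add_zero _).symm⟩

theorem extendInt_comp_relationHom (f : G.M →+ A) :
    (G.extendInt (f.comp G.graphCon.mk')).comp G.relationHom = 0 := by
  refine Finsupp.addHom_ext fun v k => ?_
  suffices G.extendInt (f.comp G.graphCon.mk') (G.relation v) = 0 by simp [relationHom, this]
  unfold relation
  split_ifs with hv
  · simp [coe_single_eq_coe_rr, hv]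
  · simp

noncomputable def liftK0 (f : G.M →+ A) : G.K0 →+ A :=
  QuotientAddGroup.lift G.relations (G.extendInt (f.comp G.graphCon.mk'))
    ((AddMonoidHom.range_le_ker_iff _ _).2 (G.extendInt_comp_relationHom f))

@[simp]
theorem liftK0_coe (f : G.M →+ A) (x : G.V →₀ ℤ) :
    G.liftK0 f x = G.extendInt (f.comp G.graphCon.mk') x := rfl

theorem liftK0_comp_toK0 (f : G.M →+ A) : (G.liftK0 f).comp G.toK0 = f :=
  AddCon.hom_ext <| by ext α; simp

end RFGraph

/-- The Grothendieck group of `M_E` (characterized by its universal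
property) is unperforated with respect to the positive cone `φ(M_E)`. -/
theorem stmt6 (G : RFGraph) (Γ : Type) [AddCommGroup Γ] (φ : G.M →+ Γ)
    (huniv : ∀ (A : Type) [AddCommGroup A] (f : G.M →+ A),
      ∃! g : Γ →+ A, g.comp φ = f)
    (g : Γ) (n : ℕ) (hn : 0 < n) (hng : n • g ∈ Set.range φ) :
    g ∈ Set.range φ := by
  obtain ⟨ψ, hψ, -⟩ := huniv G.K0 G.toK0
  have hρψ : (G.liftK0 φ).comp ψ = .id Γ :=
    (huniv Γ φ).unique (by rw [AddMonoidHom.comp_assoc, hψ, G.liftK0_comp_toK0])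
      (AddMonoidHom.id_comp φ)
  exact G.rangeUnperforated_toK0.of_comp_eq ψ (G.liftK0 φ) hψ hρψ g n hn hng
end

section
/- Let E be a row-finite directed graph and let I be an order-ideal of the graph monoid M_E. Then the set ψ(I) = { v ∈ E⁰ : a_v ∈ I } is a hereditary and saturated subset of E⁰. -/
namespace RFGraph

/-- `v ≥ w`: there is a (possibly empty) directed path from `v` to `w`. -/
def reaches (G : RFGraph) : G.V → G.V → Prop :=
  Relation.ReflTransGen (fun a b => ∃ e : G.Edge, G.s e = a ∧ G.r e = b)

/-- A subset of the vertices is hereditary. -/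
def Hereditary (G : RFGraph) (H : Set G.V) : Prop :=
  ∀ v w : G.V, v ∈ H → G.reaches v w → w ∈ H

/-- A subset of the vertices is saturated. -/
def Saturated (G : RFGraph) (H : Set G.V) : Prop :=
  ∀ v : G.V, G.emits v → (∀ e : G.Edge, G.s e = v → G.r e ∈ H) → v ∈ H

/-- An order-ideal of the graph monoid: a submonoid `I` such that
`x + y ∈ I` implies `x ∈ I` and `y ∈ I`. -/
def IsOrderIdeal (G : RFGraph) (I : Set G.M) : Prop :=
  (0 : G.M) ∈ I ∧ (∀ x y : G.M, x ∈ I → y ∈ I → x + y ∈ I) ∧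
    (∀ x y : G.M, x + y ∈ I → x ∈ I ∧ y ∈ I)

/-- The order-ideal generated by a subset of the graph monoid. -/
def genOI (G : RFGraph) (S : Set G.M) : Set G.M :=
  ⋂₀ {I : Set G.M | G.IsOrderIdeal I ∧ S ⊆ I}

end RFGraph

/-!
In `M_E` every vertex `v` emitting edges satisfies `a_v = Σ_{s(e) = v} a_{r(e)}`.
An order-ideal is closed under finite sums, which gives saturation, and contains every
summand of a sum lying in it, which gives closure under a single edge and hence,
by induction along paths, heredity.
-/

namespace RFGraph

variable {G : RFGraph}

theorem av_eq_sum_av_range {v : G.V} (hv : G.emits v) :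
    G.av v = ∑ e ∈ (G.rowFinite v).toFinset, G.av (G.r e) := by
  have hstep : G.step (Finsupp.single v 1) (G.rr v) := ⟨v, 0, hv, by simp, by simp⟩
  calc G.av v = G.graphCon.mk' (G.rr v) := (AddCon.eq _).mpr (AddConGen.Rel.of _ _ hstep)
    _ = _ := by rw [rr, map_sum]; rfl

namespace IsOrderIdeal

variable {I : Set G.M}

def toAddSubmonoid (hI : G.IsOrderIdeal I) : AddSubmonoid G.M where
  carrier := I
  zero_mem' := hI.1
  add_mem' := hI.2.1 _ _

theorem sum_mem {ι : Type*} (hI : G.IsOrderIdeal I) {s : Finset ι} {f : ι → G.M}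
    (hf : ∀ i ∈ s, f i ∈ I) : ∑ i ∈ s, f i ∈ I :=
  AddSubmonoid.sum_mem hI.toAddSubmonoid hf

theorem mem_of_sum_mem {ι : Type*} [DecidableEq ι] (hI : G.IsOrderIdeal I) {s : Finset ι}
    {f : ι → G.M} (hs : ∑ j ∈ s, f j ∈ I) {i : ι} (hi : i ∈ s) : f i ∈ I := by
  rw [← Finset.add_sum_erase s f hi] at hs
  exact (hI.2.2 _ _ hs).1

theorem av_range_mem (hI : G.IsOrderIdeal I) {e : G.Edge} (he : G.av (G.s e) ∈ I) :
    G.av (G.r e) ∈ I := by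
  classical
  rw [av_eq_sum_av_range ⟨e, rfl⟩] at he
  exact hI.mem_of_sum_mem he (by simp)

theorem hereditary (hI : G.IsOrderIdeal I) : G.Hereditary {v | G.av v ∈ I} := by
  intro v w hv hvw
  induction hvw with
  | refl => exact hv
  | tail _ hedge ih =>
    obtain ⟨e, rfl, rfl⟩ := hedge
    exact hI.av_range_mem ih

theorem saturated (hI : G.IsOrderIdeal I) : G.Saturated {v | G.av v ∈ I} := by
  intro v hv hranges
  rw [Set.mem_ofPred_eq, av_eq_sum_av_range hv]
  exact hI.sum_mem fun e he => hranges e (by simpa using he)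

end IsOrderIdeal

end RFGraph

/-- For an order-ideal `I` of `M_E`, the set
`ψ(I) = {v : a_v ∈ I}` is hereditary and saturated. -/
theorem stmt7 (G : RFGraph) (I : Set G.M) (hI : G.IsOrderIdeal I) :
    G.Hereditary {v : G.V | G.av v ∈ I} ∧ G.Saturated {v : G.V | G.av v ∈ I} :=
  ⟨hI.hereditary, hI.saturated⟩
end

section
/- Let E be a row-finite directed graph, let H ⊆ E⁰ be a hereditary and saturated subset, and let φ(H) be the order-ideal of the graph monoid M_E generated by { a_v : v ∈ H }. Then for every vertex v ∈ E⁰, a_v ∈ φ(H) if and only if v ∈ H. -/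
/-!
Being supported in `H` is a property of elements of `F_E` that every step `x + α' →₁ 𝐫(x) + α'`
preserves in both directions: forwards because `H` is hereditary, so `x ∈ H` puts `𝐫(x)` in `H`,
and backwards because `H` is saturated. It therefore descends to `M_E`, and the classes of
elements supported in `H` form an order-ideal containing every `a_w` with `w ∈ H`, but containing
`a_v` only when `v ∈ H`.
-/

namespace Finsupp

variable {ι α M : Type*} [AddCommMonoid M] [PartialOrder M] [CanonicallyOrderedAdd M]

theorem coe_support_add_subset_iff {f g : α →₀ M} {H : Set α} :
    ↑(f + g).support ⊆ H ↔ ↑f.support ⊆ H ∧ ↑g.support ⊆ H := by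
  simp only [Set.subset_def, Finset.mem_coe, mem_support_iff, add_apply, ne_eq, add_eq_zero,
    not_and_or, or_imp, forall_and]

theorem coe_support_sum_subset_iff {s : Finset ι} {f : ι → α →₀ M} {H : Set α} :
    ↑(∑ i ∈ s, f i).support ⊆ H ↔ ∀ i ∈ s, ↑(f i).support ⊆ H := by
  classical
  induction s using Finset.induction_on with
  | empty => simp
  | insert i s hi ih =>
    rw [Finset.sum_insert hi, coe_support_add_subset_iff, ih, Finset.forall_mem_insert]

variable (M) in
def supportedCon (H : Set α) : AddCon (α →₀ M) where
  r f g := ↑f.support ⊆ H ↔ ↑g.support ⊆ H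
  iseqv := ⟨fun _ => Iff.rfl, Iff.symm, Iff.trans⟩
  add' h₁ h₂ := by
    simp only [coe_support_add_subset_iff]
    exact and_congr h₁ h₂

end Finsupp

namespace RFGraph

theorem Hereditary.r_mem {G : RFGraph} {H : Set G.V} (hher : G.Hereditary H) {e : G.Edge}
    (he : G.s e ∈ H) : G.r e ∈ H :=
  hher _ _ he (Relation.ReflTransGen.single ⟨e, rfl, rfl⟩)

variable (G : RFGraph) {H : Set G.V}

theorem coe_support_rr_subset_iff (x : G.V) :
    ↑(G.rr x).support ⊆ H ↔ ∀ e : G.Edge, G.s e = x → G.r e ∈ H := by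
  simp [rr, Finsupp.coe_support_sum_subset_iff]

theorem graphCon_le_supportedCon (hher : G.Hereditary H) (hsat : G.Saturated H) :
    G.graphCon ≤ Finsupp.supportedCon ℕ H := by
  refine AddCon.addConGen_le.mpr ?_
  rintro _ _ ⟨x, α', hx, rfl, rfl⟩
  change _ ↔ _
  simp only [Finsupp.coe_support_add_subset_iff, Finsupp.support_single x one_ne_zero,
    Finset.coe_singleton, Set.singleton_subset_iff, coe_support_rr_subset_iff]
  exact and_congr_left fun _ =>
    ⟨fun hxH e he => hher.r_mem (he ▸ hxH), hsat x hx⟩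

def supportedClasses (H : Set G.V) : Set G.M :=
  G.graphCon.mk' '' {α | ↑α.support ⊆ H}

theorem coe_support_subset_of_mk'_mem_supportedClasses (hher : G.Hereditary H)
    (hsat : G.Saturated H) {α : G.F} (hα : G.graphCon.mk' α ∈ G.supportedClasses H) :
    ↑α.support ⊆ H := by
  obtain ⟨β, hβ, hβα⟩ := hα
  exact G.graphCon_le_supportedCon hher hsat (G.graphCon.eq.mp hβα) |>.mp hβ

theorem isOrderIdeal_supportedClasses (hher : G.Hereditary H) (hsat : G.Saturated H) :
    G.IsOrderIdeal (G.supportedClasses H) := by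
  refine ⟨⟨0, by simp, map_zero _⟩, ?_, ?_⟩
  · rintro _ _ ⟨α, hα, rfl⟩ ⟨β, hβ, rfl⟩
    exact ⟨α + β, Finsupp.coe_support_add_subset_iff.mpr ⟨hα, hβ⟩, map_add _ _ _⟩
  · intro x y hxy
    obtain ⟨α, rfl⟩ := AddCon.mk'_surjective (c := G.graphCon) x
    obtain ⟨β, rfl⟩ := AddCon.mk'_surjective (c := G.graphCon) y
    rw [← map_add] at hxy
    obtain ⟨hα, hβ⟩ := Finsupp.coe_support_add_subset_iff.mp
      (G.coe_support_subset_of_mk'_mem_supportedClasses hher hsat hxy)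
    exact ⟨⟨α, hα, rfl⟩, ⟨β, hβ, rfl⟩⟩

theorem av_mem_supportedClasses_iff (hher : G.Hereditary H) (hsat : G.Saturated H) (v : G.V) :
    G.av v ∈ G.supportedClasses H ↔ v ∈ H := by
  refine ⟨fun hv => ?_, fun hv => ⟨_, ?_, rfl⟩⟩
  · simpa [Finsupp.support_single v one_ne_zero] using
      G.coe_support_subset_of_mk'_mem_supportedClasses hher hsat hv
  · simpa [Finsupp.support_single v one_ne_zero] using hv

theorem subset_genOI (S : Set G.M) : S ⊆ G.genOI S :=
  Set.subset_sInter fun _ hI => hI.2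

theorem genOI_subset {S I : Set G.M} (hI : G.IsOrderIdeal I) (hSI : S ⊆ I) : G.genOI S ⊆ I :=
  Set.sInter_subset_of_mem ⟨hI, hSI⟩

end RFGraph

/-- For a hereditary saturated `H ⊆ E⁰` and the order-ideal `φ(H)`
of `M_E` generated by `{a_v : v ∈ H}`, one has `a_v ∈ φ(H)` iff `v ∈ H`. -/
theorem stmt8 (G : RFGraph) (H : Set G.V)
    (hher : G.Hereditary H) (hsat : G.Saturated H) (v : G.V) :
    G.av v ∈ G.genOI (G.av '' H) ↔ v ∈ H := by
  refine ⟨fun hv => ?_, fun hv => G.subset_genOI _ ⟨v, hv, rfl⟩⟩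
  have hclasses : G.genOI (G.av '' H) ⊆ G.supportedClasses H :=
    G.genOI_subset (G.isOrderIdeal_supportedClasses hher hsat) <| by
      rintro _ ⟨w, hw, rfl⟩
      exact (G.av_mem_supportedClasses_iff hher hsat w).mpr hw
  exact (G.av_mem_supportedClasses_iff hher hsat v).mp (hclasses hv)
end

section
/- Let E be a row-finite directed graph. Every order-ideal I of the graph monoid M_E is generated as a monoid by the set { a_v : v ∈ E⁰ and a_v ∈ I }. -/
/-! A graph monoid is generated by the classes `a_v`, and in any monoid generated by a set `S`,
a submonoid closed under taking summands is generated by the elements of `S` it contains: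
induct on a representation of an element as a sum of elements of `S`, each of which is a
summand of the element and therefore lies in the submonoid. -/

theorem AddSubmonoid.closure_inter_eq_of_closure_eq_top {M : Type*} [AddMonoid M] {S : Set M}
    (hS : closure S = ⊤) (I : AddSubmonoid M) (hI : ∀ x y, x + y ∈ I → x ∈ I ∧ y ∈ I) :
    closure (S ∩ I) = I := by
  refine le_antisymm (closure_le.mpr Set.inter_subset_right) fun x hx => ?_
  have hxS : x ∈ closure S := hS ▸ mem_top x
  induction hxS using closure_induction with
  | mem s hs => exact subset_closure ⟨hs, hx⟩
  | zero => exact zero_mem _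
  | add y z _ _ ihy ihz => exact add_mem (ihy (hI y z hx).1) (ihz (hI y z hx).2)

theorem Finsupp.addClosure_range_single_one (α : Type*) :
    AddSubmonoid.closure (Set.range fun a : α => Finsupp.single a 1) = ⊤ := by
  rw [eq_top_iff, ← Finsupp.add_closure_setOfPred_eq_single, AddSubmonoid.closure_le]
  rintro _ ⟨a, n, rfl⟩
  rw [SetLike.mem_coe, ← Finsupp.smul_single_one]
  exact AddSubmonoid.nsmul_mem _ (AddSubmonoid.subset_closure (Set.mem_range_self a)) n

namespace RFGraph

theorem addClosure_range_av (G : RFGraph) : AddSubmonoid.closure (Set.range G.av) = ⊤ := by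
  have hav : G.av = G.graphCon.mk' ∘ fun v => Finsupp.single v 1 := rfl
  rw [hav, Set.range_comp, ← AddMonoidHom.map_mclosure, Finsupp.addClosure_range_single_one,
    ← AddMonoidHom.mrange_eq_map, AddMonoidHom.mrange_eq_top]
  exact AddCon.mk'_surjective

def IsOrderIdeal.toAddSubmonoid_s10 {G : RFGraph} {I : Set G.M} (hI : G.IsOrderIdeal I) :
    AddSubmonoid G.M where
  carrier := I
  zero_mem' := hI.1
  add_mem' := hI.2.1 _ _

end RFGraph

/-- Every order-ideal `I` of `M_E` is generated as a monoid by
`{a_v : v ∈ E⁰, a_v ∈ I}`. -/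
theorem stmt10 (G : RFGraph) (I : Set G.M) (hI : G.IsOrderIdeal I) :
    I = ↑(AddSubmonoid.closure {m : G.M | (∃ v : G.V, m = G.av v) ∧ m ∈ I}) := by
  have hgen : {m : G.M | (∃ v : G.V, m = G.av v) ∧ m ∈ I} = Set.range G.av ∩ I := by
    simp only [Set.range, eq_comm, Set.ofPred_and, Set.ofPred_mem_eq]
  rw [hgen]
  exact congrArg SetLike.coe (AddSubmonoid.closure_inter_eq_of_closure_eq_top
    G.addClosure_range_av hI.toAddSubmonoid_s10 hI.2.2).symm
end

section
/- Let E be a finite cofinal directed graph containing no loops. Then E has a sink v, and the graph monoid M_E is a free abelian monoid of rank one generated by a_v; that is, M_E is isomorphic to (ℕ, +) via n ↦ n·a_v. -/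
namespace RFGraph

/-- A sink is a vertex emitting no edges. -/
def IsSink (G : RFGraph) (v : G.V) : Prop := ¬ G.emits v

/-- An infinite directed path, given by its sequence of edges. -/
def IsInfPath (G : RFGraph) (γ : ℕ → G.Edge) : Prop :=
  ∀ n : ℕ, G.r (γ n) = G.s (γ (n + 1))

/-- `E` is cofinal: every vertex connects to a vertex on any element of `E^{≤∞}`,
i.e. to every sink and to a vertex on every infinite path. -/
def Cofinal (G : RFGraph) : Prop :=
  (∀ v w : G.V, G.IsSink w → G.reaches v w) ∧
  (∀ (v : G.V) (γ : ℕ → G.Edge), G.IsInfPath γ → ∃ n : ℕ, G.reaches v (G.s (γ n)))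

end RFGraph

theorem AddMonoid.exists_addEquiv_nat_of_eq_nsmul {M : Type*} [AddMonoid M] (a : M)
    (ψ : M →+ ℕ) (hψa : ψ a = 1) (hψ : ∀ m, ψ m • a = m) :
    ∃ φ : ℕ ≃+ M, ∀ n : ℕ, φ n = n • a :=
  ⟨AddMonoidHom.toAddEquiv (multiplesHom M a) ψ
      (AddMonoidHom.ext_nat (by simp [hψa])) (AddMonoidHom.ext hψ),
    fun _ => rfl⟩

namespace RFGraph

def adj (G : RFGraph) (a b : G.V) : Prop := ∃ e : G.Edge, G.s e = a ∧ G.r e = b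

variable {G : RFGraph}

theorem wellFounded_flip_adj [Finite G.V] (hnoloop : ∀ e : G.Edge, ¬ G.reaches (G.r e) (G.s e)) :
    WellFounded (flip G.adj) := by
  have hirr : ∀ w, ¬ Relation.TransGen (flip G.adj) w w := by
    intro w hw
    obtain ⟨b, ⟨e, rfl, rfl⟩, hb⟩ :=
      Relation.TransGen.head'_iff.mp (Relation.transGen_swap.mp hw)
    exact hnoloop e hb
  have : Std.Irrefl (Relation.TransGen (flip G.adj)) := ⟨hirr⟩
  exact Subrelation.wf Relation.TransGen.single (Finite.wellFounded_of_trans_of_irrefl _)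

theorem exists_isSink [Nonempty G.V] (hwf : WellFounded (flip G.adj)) :
    ∃ v : G.V, G.IsSink v := by
  obtain ⟨v, -, hmin⟩ := hwf.has_min Set.univ Set.univ_nonempty
  exact ⟨v, fun ⟨e, he⟩ => hmin (G.r e) trivial ⟨e, he, rfl⟩⟩

theorem Cofinal.eq_of_isSink (hcof : G.Cofinal) {v w : G.V} (hv : G.IsSink v)
    (hw : G.IsSink w) : w = v := by
  rcases (hcof.1 w v hv).cases_head with h | ⟨_, ⟨e, he, -⟩, -⟩
  · exact h
  · exact absurd ⟨e, he⟩ hw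

theorem av_eq_sum_av {w : G.V} (hw : G.emits w) :
    G.av w = ∑ e ∈ (G.rowFinite w).toFinset, G.av (G.r e) := by
  have hstep : G.step (Finsupp.single w 1) (G.rr w) :=
    ⟨w, 0, hw, (add_zero _).symm, (add_zero _).symm⟩
  have h : G.av w = G.graphCon.mk' (G.rr w) := G.graphCon.eq.mpr (AddConGen.Rel.of _ _ hstep)
  rw [h, rr, map_sum]
  rfl

section weight

variable (hwf : WellFounded (flip G.adj))

open Classical in
/-- The number of paths from `w` to a sink. -/
noncomputable def weight : G.V → ℕ :=
  hwf.fix fun w ih =>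
    if G.emits w then
      ∑ e ∈ (G.rowFinite w).toFinset.attach,
        ih (G.r e) ⟨e, (G.rowFinite w).mem_toFinset.mp e.2, rfl⟩
    else 1

theorem weight_of_emits {w : G.V} (hw : G.emits w) :
    weight hwf w = ∑ e ∈ (G.rowFinite w).toFinset, weight hwf (G.r e) := by
  classical
  rw [weight, hwf.fix_eq, if_pos hw]
  exact Finset.sum_attach _ fun e => weight hwf (G.r e)

theorem weight_of_isSink {w : G.V} (hw : G.IsSink w) : weight hwf w = 1 := by
  classical
  rw [weight, hwf.fix_eq, if_neg hw]

noncomputable def weightHom : G.F →+ ℕ :=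
  Finsupp.liftAddHom fun w => AddMonoidHom.mulRight (weight hwf w)

theorem weightHom_single (w : G.V) (n : ℕ) :
    weightHom hwf (Finsupp.single w n) = n * weight hwf w :=
  Finsupp.liftAddHom_apply_single _ _ _

theorem weightHom_rr {w : G.V} (hw : G.emits w) : weightHom hwf (G.rr w) = weight hwf w := by
  simp only [rr, map_sum, weightHom_single, one_mul, weight_of_emits hwf hw]

theorem weightHom_eq_of_step {α β : G.F} (h : G.step α β) :
    weightHom hwf α = weightHom hwf β := by
  obtain ⟨x, α', hx, rfl, rfl⟩ := h
  rw [map_add, map_add, weightHom_single, one_mul, weightHom_rr hwf hx]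

theorem graphCon_le_ker_weightHom : G.graphCon ≤ AddCon.ker (weightHom hwf) :=
  AddCon.addConGen_le.mpr fun _ _ => weightHom_eq_of_step hwf

noncomputable def weightM : G.M →+ ℕ :=
  G.graphCon.lift (weightHom hwf) (graphCon_le_ker_weightHom hwf)

theorem weightM_mk (α : G.F) : weightM hwf (G.graphCon.mk' α) = weightHom hwf α :=
  AddCon.lift_mk' _ α

theorem weightM_av (w : G.V) : weightM hwf (G.av w) = weight hwf w := by
  rw [av, weightM_mk, weightHom_single, one_mul]

theorem av_eq_weight_nsmul {v : G.V} (hv : ∀ w, G.IsSink w → w = v) (w : G.V) :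
    G.av w = weight hwf w • G.av v := by
  induction w using hwf.induction with
  | _ w ih =>
    by_cases hw : G.emits w
    · rw [av_eq_sum_av hw, weight_of_emits hwf hw, Finset.sum_smul]
      exact Finset.sum_congr rfl fun e he =>
        ih (G.r e) ⟨e, (G.rowFinite w).mem_toFinset.mp he, rfl⟩
    · obtain rfl := hv w hw
      rw [weight_of_isSink hwf hw, one_smul]

theorem mk'_eq_weightHom_nsmul {v : G.V} (hv : ∀ w, G.IsSink w → w = v) (α : G.F) :
    G.graphCon.mk' α = weightHom hwf α • G.av v := by
  have : G.graphCon.mk' = (multiplesHom G.M (G.av v)).comp (weightHom hwf) :=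
    Finsupp.addHom_ext' fun w => AddMonoidHom.ext_nat <| by
      simp only [AddMonoidHom.comp_apply, Finsupp.singleAddHom_apply, multiplesHom_apply,
        weightHom_single, one_mul]
      exact av_eq_weight_nsmul hwf hv w
  exact DFunLike.congr_fun this α

end weight

end RFGraph

theorem stmt12_general (G : RFGraph) [Nonempty G.V] [Finite G.V]
    (hcof : G.Cofinal)
    (hnoloop : ∀ e : G.Edge, ¬ G.reaches (G.r e) (G.s e)) :
    ∃ v : G.V, G.IsSink v ∧ ∃ φ : ℕ ≃+ G.M, ∀ n : ℕ, φ n = n • G.av v := by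
  have hwf := RFGraph.wellFounded_flip_adj hnoloop
  obtain ⟨v, hv⟩ := RFGraph.exists_isSink hwf
  have hunique : ∀ w, G.IsSink w → w = v := fun _ hw => hcof.eq_of_isSink hv hw
  refine ⟨v, hv, AddMonoid.exists_addEquiv_nat_of_eq_nsmul _ (RFGraph.weightM hwf) ?_ ?_⟩
  · rw [RFGraph.weightM_av, RFGraph.weight_of_isSink hwf hv]
  · intro m
    obtain ⟨α, rfl⟩ := G.graphCon.mk'_surjective m
    rw [RFGraph.weightM_mk, RFGraph.mk'_eq_weightHom_nsmul hwf hunique]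

/-- A finite cofinal graph with no loops has a sink `v`, and
`M_E` is free abelian of rank one generated by `a_v`: `M_E ≅ ℕ` via `n ↦ n • a_v`. -/
theorem stmt12 (G : RFGraph) [Nonempty G.V] [Finite G.V] [Finite G.Edge]
    (hcof : G.Cofinal)
    (hnoloop : ∀ e : G.Edge, ¬ G.reaches (G.r e) (G.s e)) :
    ∃ v : G.V, G.IsSink v ∧ ∃ φ : ℕ ≃+ G.M, ∀ n : ℕ, φ n = n • G.av v :=
  stmt12_general G hcof hnoloop
end

section
/- Let E be a finite cofinal directed graph that contains at least one loop and in which every simple loop has an exit. Then for every nonzero element x of the graph monoid M_E there exists a nonzero y ∈ M_E with x = x + y; consequently M_E ∖ {0} is a group under addition. -/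
namespace RFGraph

/-- A loop of length `n+1`, presented as a cyclic sequence of edges:
`r(f i) = s(f (i+1))` with indices taken mod `n+1`. -/
def IsLoop (G : RFGraph) {n : ℕ} (f : Fin (n + 1) → G.Edge) : Prop :=
  ∀ i : Fin (n + 1), G.r (f i) = G.s (f (i + 1))

/-- A simple loop: the sources of its edges are pairwise distinct. -/
def IsSimpleLoop (G : RFGraph) {n : ℕ} (f : Fin (n + 1) → G.Edge) : Prop :=
  G.IsLoop f ∧ Function.Injective fun i => G.s (f i)

/-- The loop `f` has an exit: an edge starting at a vertex of the loop that is
not one of the edges of the loop. -/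
def HasExit (G : RFGraph) {n : ℕ} (f : Fin (n + 1) → G.Edge) : Prop :=
  ∃ e : G.Edge, (∃ i : Fin (n + 1), G.s e = G.s (f i)) ∧ ∀ i : Fin (n + 1), e ≠ f i

end RFGraph

/-! Fix a loop `f` with base vertex `p = s (f 0)`. Cofinality, applied to the infinite path
running around `f`, makes every vertex reach `p`, so every nonzero `x` has the form `a_p + c`.
A loop without exit would contain a simple loop without exit, so some vertex of `f` emits an edge
besides its loop edge; pushing `a_p` once around `f` then gives `a_p = a_p + d` with `d ≠ 0`,
whence `x + d = x` for all `x ≠ 0`. The monoid is conical because `→₁` never relates `0` to a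
nonzero element. Finally every `a_u` lies below a multiple `k • a_p`: the vertices failing this
contain no sink and each has a successor among them, so they carry an infinite path that `p`
cannot reach. Writing `k • a_p = x + c` and `d = a_p + c'` gives
`d = d + k • d = x + (d + c + k • c')`, an inverse of `x`. -/

section Monoid

variable (A : Type*) [AddCommMonoid A]

def zeroIffCon [Subsingleton (AddUnits A)] : AddCon A where
  r a b := (a = 0 ↔ b = 0)
  iseqv := ⟨fun _ => Iff.rfl, Iff.symm, Iff.trans⟩
  add' hab hcd := by simp only [add_eq_zero, hab, hcd]

variable {A}

def belowMultiples (x : A) : AddSubmonoid A where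
  carrier := {y | ∃ (k : ℕ) (c : A), k • x = y + c}
  zero_mem' := ⟨0, 0, by rw [zero_nsmul, add_zero]⟩
  add_mem' := by
    rintro y₁ y₂ ⟨k₁, c₁, h₁⟩ ⟨k₂, c₂, h₂⟩
    exact ⟨k₁ + k₂, c₁ + c₂, by rw [add_nsmul, h₁, h₂, add_add_add_comm]⟩

lemma mem_belowMultiples {x y : A} :
    y ∈ belowMultiples x ↔ ∃ (k : ℕ) (c : A), k • x = y + c := Iff.rfl

lemma mem_belowMultiples_of_eq_add {x y c : A} (h : x = y + c) : y ∈ belowMultiples x :=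
  ⟨1, c, by rw [one_nsmul, h]⟩

lemma add_nsmul_eq_self {a b : A} (h : a + b = a) (k : ℕ) : a + k • b = a := by
  induction k with
  | zero => rw [zero_nsmul, add_zero]
  | succ k ih => rw [succ_nsmul, ← add_assoc, ih, h]

end Monoid

namespace RFGraph

variable (G : RFGraph)

open Fin.NatCast

lemma rr_ne_zero {v : G.V} (h : G.emits v) : G.rr v ≠ 0 := by
  obtain ⟨e, he⟩ := h
  rw [rr, Ne, Finset.sum_eq_zero_iff]
  exact fun h0 => Finsupp.single_ne_zero.2 one_ne_zero (h0 e ((G.rowFinite v).mem_toFinset.2 he))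

lemma step_le_zeroIffCon : G.step ≤ zeroIffCon G.F := by
  rintro _ _ ⟨x, α', hx, rfl, rfl⟩
  change (_ = 0 ↔ _ = 0)
  simp only [add_eq_zero, Finsupp.single_ne_zero.2 one_ne_zero, G.rr_ne_zero hx, false_and]

lemma mk_eq_zero_iff {α : G.F} : G.graphCon.mk' α = 0 ↔ α = 0 := by
  refine ⟨fun h => ?_, fun h => by rw [h, map_zero]⟩
  have hα : G.graphCon α 0 := (AddCon.eq _).1 h
  exact (AddCon.addConGen_le.2 G.step_le_zeroIffCon hα).2 rfl

instance : Subsingleton (AddUnits G.M) := by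
  refine subsingleton_of_forall_eq 0 fun u => AddUnits.ext ?_
  obtain ⟨α, hα⟩ := AddCon.mk'_surjective (u : G.M)
  obtain ⟨β, hβ⟩ := AddCon.mk'_surjective (↑(-u) : G.M)
  have hαβ : G.graphCon.mk' (α + β) = 0 := by rw [map_add, hα, hβ, AddUnits.add_neg]
  rw [AddUnits.val_zero, ← hα, G.mk_eq_zero_iff.2 (add_eq_zero.1 (G.mk_eq_zero_iff.1 hαβ)).1]

lemma mk_eq_mk_of_step {α β : G.F} (h : G.step α β) : G.graphCon.mk' α = G.graphCon.mk' β :=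
  (AddCon.eq _).2 (AddConGen.Rel.of _ _ h)

lemma step_single_rr {v : G.V} (h : G.emits v) : G.step (Finsupp.single v 1) (G.rr v) :=
  ⟨v, 0, h, (add_zero _).symm, (add_zero _).symm⟩

lemma av_eq_sum {v : G.V} (h : G.emits v) :
    G.av v = ∑ e ∈ (G.rowFinite v).toFinset, G.av (G.r e) := by
  rw [av, G.mk_eq_mk_of_step (G.step_single_rr h), rr, map_sum]
  rfl

noncomputable def rrErase (e : G.Edge) : G.F := G.rr (G.s e) - Finsupp.single (G.r e) 1

lemma single_le_rr (e : G.Edge) : Finsupp.single (G.r e) 1 ≤ G.rr (G.s e) :=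
  Finset.single_le_sum (f := fun e' => Finsupp.single (G.r e') 1) (fun _ _ => zero_le)
    ((G.rowFinite _).mem_toFinset.2 rfl)

lemma single_add_rrErase (e : G.Edge) : Finsupp.single (G.r e) 1 + G.rrErase e = G.rr (G.s e) :=
  add_tsub_cancel_of_le (G.single_le_rr e)

lemma rrErase_ne_zero {e e' : G.Edge} (hs : G.s e' = G.s e) (hne : e' ≠ e) : G.rrErase e ≠ 0 := by
  classical
  have hpair : Finsupp.single (G.r e) 1 + Finsupp.single (G.r e') 1 ≤ G.rr (G.s e) :=
    calc Finsupp.single (G.r e) 1 + Finsupp.single (G.r e') 1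
        = ∑ x ∈ {e, e'}, Finsupp.single (G.r x) 1 :=
          (Finset.sum_pair (f := fun x => Finsupp.single (G.r x) 1) hne.symm).symm
      _ ≤ G.rr (G.s e) := Finset.sum_le_sum_of_subset <| Finset.insert_subset_iff.2
          ⟨(G.rowFinite _).mem_toFinset.2 rfl,
            Finset.singleton_subset_iff.2 ((G.rowFinite _).mem_toFinset.2 hs)⟩
  intro h0
  have h := le_tsub_of_add_le_left hpair
  rw [← rrErase, h0, nonpos_iff_eq_zero, Finsupp.single_eq_zero] at h
  exact one_ne_zero h

lemma av_source_eq (e : G.Edge) :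
    G.av (G.s e) = G.av (G.r e) + G.graphCon.mk' (G.rrErase e) := by
  rw [av, G.mk_eq_mk_of_step (G.step_single_rr ⟨e, rfl⟩), ← G.single_add_rrErase e, map_add]
  rfl

lemma exists_av_eq_add_of_reaches {v w : G.V} (h : G.reaches v w) :
    ∃ c, G.av v = G.av w + c := by
  induction h with
  | refl => exact ⟨0, (add_zero _).symm⟩
  | tail _ hvw ih =>
    obtain ⟨c, hc⟩ := ih
    obtain ⟨e, rfl, rfl⟩ := hvw
    exact ⟨G.graphCon.mk' (G.rrErase e) + c, by rw [hc, G.av_source_eq, add_assoc]⟩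

lemma exists_eq_av_add_of_ne_zero {x : G.M} (hx : x ≠ 0) : ∃ v c, x = G.av v + c := by
  obtain ⟨α, rfl⟩ := AddCon.mk'_surjective x
  obtain ⟨v, hv⟩ : ∃ v, v ∈ α.support :=
    Finsupp.support_nonempty_iff.2 fun h => hx (by rw [h, map_zero])
  obtain ⟨β, rfl⟩ := exists_add_of_le (Finsupp.single_le_iff.2 (Nat.one_le_iff_ne_zero.2
    (Finsupp.mem_support_iff.1 hv)))
  exact ⟨v, G.graphCon.mk' β, map_add _ _ _⟩

lemma closure_range_av : AddSubmonoid.closure (Set.range G.av) = ⊤ := by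
  rw [eq_top_iff]
  rintro x -
  obtain ⟨α, rfl⟩ := AddCon.mk'_surjective x
  induction α using Finsupp.induction with
  | zero => rw [map_zero]; exact zero_mem _
  | single_add v k α _ _ ih =>
    rw [map_add, ← Finsupp.smul_single_one, map_nsmul]
    exact add_mem (nsmul_mem (AddSubmonoid.subset_closure (Set.mem_range_self v)) k) ih

section Loop

variable {G} {n : ℕ} {f : Fin (n + 1) → G.Edge}

lemma IsLoop.r_natCast_eq (hf : G.IsLoop f) (k : ℕ) : G.r (f k) = G.s (f (k + 1 : ℕ)) := by
  rw [Nat.cast_succ]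
  exact hf k

lemma IsLoop.reaches_base (hf : G.IsLoop f) (i : Fin (n + 1)) :
    G.reaches (G.s (f i)) (G.s (f 0)) := by
  induction i using Fin.reverseInduction with
  | last => exact .single ⟨f (Fin.last n), rfl, by rw [hf, Fin.last_add_one]⟩
  | cast i ih => exact .head ⟨f i.castSucc, rfl, by rw [hf, Fin.coeSucc_eq_succ]⟩ ih

lemma IsLoop.reaches_base_of_cofinal (hf : G.IsLoop f) (hcof : G.Cofinal) (u : G.V) :
    G.reaches u (G.s (f 0)) := by
  obtain ⟨k, hk⟩ := hcof.2 u (fun k => f k) hf.r_natCast_eq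
  exact hk.trans (hf.reaches_base _)

lemma IsLoop.av_base_eq_add (hf : G.IsLoop f) :
    G.av (G.s (f 0)) = G.av (G.s (f 0)) + ∑ i, G.graphCon.mk' (G.rrErase (f i)) := by
  have h : ∀ k : ℕ, G.av (G.s (f 0)) =
      G.av (G.s (f k)) + ∑ j ∈ Finset.range k, G.graphCon.mk' (G.rrErase (f j)) := by
    intro k
    induction k with
    | zero => rw [Finset.sum_range_zero, add_zero, Nat.cast_zero]
    | succ k ih =>
      rw [ih, G.av_source_eq, hf.r_natCast_eq, Finset.sum_range_succ_comm, add_assoc]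
  simpa only [Fin.natCast_self, ← Fin.sum_univ_eq_sum_range, Fin.cast_val_eq_self] using h (n + 1)

lemma IsLoop.exists_eq_av_base_add (hf : G.IsLoop f) (hcof : G.Cofinal) {x : G.M} (hx : x ≠ 0) :
    ∃ c, x = G.av (G.s (f 0)) + c := by
  obtain ⟨v, c, rfl⟩ := G.exists_eq_av_add_of_ne_zero hx
  obtain ⟨c', hc'⟩ := G.exists_av_eq_add_of_reaches (hf.reaches_base_of_cofinal hcof v)
  exact ⟨c' + c, by rw [hc', add_assoc]⟩

/- Without such an edge every vertex of `f` has a unique out-edge. Following it from `s (f 0)` is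
periodic, and one minimal period traces a simple loop, which then has no exit. -/
lemma IsLoop.exists_exit_edge (hf : G.IsLoop f)
    (hexit : ∀ (m : ℕ) (g : Fin (m + 1) → G.Edge), G.IsSimpleLoop g → G.HasExit g) :
    ∃ (i : Fin (n + 1)) (e : G.Edge), G.s e = G.s (f i) ∧ e ≠ f i := by
  classical
  by_contra! hno
  let T : G.V → G.V := fun u => if h : G.emits u then G.r h.choose else u
  have hT : ∀ k : ℕ, T^[k] (G.s (f 0)) = G.s (f k) := by
    intro k
    induction k with
    | zero => rw [Function.iterate_zero_apply, Nat.cast_zero]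
    | succ k ih =>
      have h : G.emits (G.s (f k)) := ⟨f k, rfl⟩
      have hTk : T (G.s (f k)) = G.r (f k) :=
        (dif_pos h).trans (congrArg G.r (hno _ _ h.choose_spec))
      rw [Function.iterate_succ_apply', ih, hTk, hf.r_natCast_eq]
  have hper : Function.IsPeriodicPt T (n + 1) (G.s (f 0)) := by
    rw [Function.IsPeriodicPt, Function.IsFixedPt, hT, Fin.natCast_self]
  obtain ⟨m, hm⟩ := Nat.exists_eq_add_one_of_ne_zero (hper.minimalPeriod_pos n.succ_pos).ne'
  have hsg : ∀ j : Fin (m + 1), G.s (f (j : ℕ)) = T^[j] (G.s (f 0)) := fun j => (hT j).symm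
  have hsimple : G.IsSimpleLoop fun j : Fin (m + 1) => f (j : ℕ) := by
    refine ⟨fun j => ?_, fun j₁ j₂ h => Fin.ext ?_⟩
    · rw [hf.r_natCast_eq, ← hT, hsg, Fin.val_add, Fin.val_one', Nat.add_mod_mod,
        ← Function.iterate_mod_minimalPeriod_eq, hm]
    · refine Function.iterate_injOn_Iio_minimalPeriod ?_ ?_
        ((hsg j₁).symm.trans (h.trans (hsg j₂)))
      · rw [Set.mem_Iio, hm]; exact j₁.isLt
      · rw [Set.mem_Iio, hm]; exact j₂.isLt
  obtain ⟨e, ⟨j, hej⟩, hne⟩ := hexit m _ hsimple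
  exact hne j (hno _ e hej)

lemma IsLoop.exists_av_base_eq_add_self (hf : G.IsLoop f)
    (hexit : ∀ (m : ℕ) (g : Fin (m + 1) → G.Edge), G.IsSimpleLoop g → G.HasExit g) :
    ∃ d : G.M, d ≠ 0 ∧ G.av (G.s (f 0)) = G.av (G.s (f 0)) + d := by
  obtain ⟨i, e, hs, hne⟩ := hf.exists_exit_edge hexit
  refine ⟨_, ?_, hf.av_base_eq_add⟩
  rw [Ne, Finset.sum_eq_zero_iff, not_forall]
  exact ⟨i, fun h => G.rrErase_ne_zero hs hne (G.mk_eq_zero_iff.1 (h (Finset.mem_univ i)))⟩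

end Loop

lemma exists_isInfPath_of_forall_exists_edge {S : Set G.V}
    (hS : ∀ u ∈ S, ∃ e, G.s e = u ∧ G.r e ∈ S) {u : G.V} (hu : u ∈ S) :
    ∃ γ, G.IsInfPath γ ∧ ∀ k, G.s (γ k) ∈ S := by
  choose out hout using hS
  let next : S → S := fun w => ⟨G.r (out w w.2), (hout w w.2).2⟩
  let w : ℕ → S := fun k => next^[k] ⟨u, hu⟩
  refine ⟨fun k => out (w k) (w k).2, fun k => ?_, fun k => ?_⟩
  · rw [(hout _ _).1]
    exact congrArg Subtype.val (Function.iterate_succ_apply' next k ⟨u, hu⟩).symm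
  · rw [(hout _ _).1]
    exact (w k).2

lemma av_mem_belowMultiples (hcof : G.Cofinal) (p u : G.V) :
    G.av u ∈ belowMultiples (G.av p) := by
  by_contra hu
  let S : Set G.V := {w | G.av w ∉ belowMultiples (G.av p)}
  have hreach : ∀ w, G.reaches p w → w ∉ S := fun w h hw => by
    obtain ⟨c, hc⟩ := G.exists_av_eq_add_of_reaches h
    exact hw (mem_belowMultiples_of_eq_add hc)
  have hS : ∀ w ∈ S, ∃ e, G.s e = w ∧ G.r e ∈ S := by
    intro w hw
    have hem : G.emits w := by_contra fun hsink => hreach w (hcof.1 p w hsink) hw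
    by_contra! hall
    refine hw (G.av_eq_sum hem ▸ AddSubmonoid.sum_mem _ fun e he => ?_)
    exact of_not_not (hall e ((G.rowFinite w).mem_toFinset.1 he))
  obtain ⟨γ, hγ, hγS⟩ := G.exists_isInfPath_of_forall_exists_edge hS hu
  obtain ⟨k, hk⟩ := hcof.2 p γ hγ
  exact hreach _ hk (hγS k)

lemma mem_belowMultiples_av (hcof : G.Cofinal) (p : G.V) (x : G.M) :
    x ∈ belowMultiples (G.av p) :=
  AddSubmonoid.closure_le.2 (Set.range_subset_iff.2 (G.av_mem_belowMultiples hcof p))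
    (G.closure_range_av ▸ AddSubmonoid.mem_top x)

end RFGraph

theorem stmt13_general (G : RFGraph)
    (hcof : G.Cofinal)
    (hloop : ∃ (n : ℕ) (f : Fin (n + 1) → G.Edge), G.IsLoop f)
    (hexit : ∀ (n : ℕ) (f : Fin (n + 1) → G.Edge), G.IsSimpleLoop f → G.HasExit f) :
    (∀ x : G.M, x ≠ 0 → ∃ y : G.M, y ≠ 0 ∧ x = x + y) ∧
    (∀ x y : G.M, x ≠ 0 → y ≠ 0 → x + y ≠ 0) ∧
    (∃ z : G.M, z ≠ 0 ∧ (∀ x : G.M, x ≠ 0 → x + z = x) ∧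
      (∀ x : G.M, x ≠ 0 → ∃ w : G.M, w ≠ 0 ∧ x + w = z)) := by
  obtain ⟨n, f, hf⟩ := hloop
  obtain ⟨d, hd, hpd⟩ := hf.exists_av_base_eq_add_self hexit
  have hid : ∀ x : G.M, x ≠ 0 → x + d = x := fun x hx => by
    obtain ⟨c, rfl⟩ := hf.exists_eq_av_base_add hcof hx
    rw [add_right_comm, ← hpd]
  refine ⟨fun x hx => ⟨d, hd, (hid x hx).symm⟩, fun x y hx _ h => hx (add_eq_zero.1 h).1,
    d, hd, hid, fun x hx => ?_⟩
  obtain ⟨k, c, hk⟩ := mem_belowMultiples.1 (G.mem_belowMultiples_av hcof (G.s (f 0)) x)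
  obtain ⟨c', hc'⟩ := hf.exists_eq_av_base_add hcof hd
  refine ⟨d + c + k • c', fun h => hd (add_eq_zero.1 (add_eq_zero.1 h).1).1, ?_⟩
  calc x + (d + c + k • c') = d + k • (G.av (G.s (f 0)) + c') := by
        rw [nsmul_add, hk]; abel
    _ = d := by rw [← hc', add_nsmul_eq_self (hid d hd)]

/-- For a finite cofinal graph containing a loop, in which every
simple loop has an exit, every nonzero `x ∈ M_E` satisfies `x = x + y` for some
nonzero `y`; consequently `M_E ∖ {0}` is a group under addition. -/
theorem stmt13 (G : RFGraph) [Finite G.V] [Finite G.Edge]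
    (hcof : G.Cofinal)
    (hloop : ∃ (n : ℕ) (f : Fin (n + 1) → G.Edge), G.IsLoop f)
    (hexit : ∀ (n : ℕ) (f : Fin (n + 1) → G.Edge), G.IsSimpleLoop f → G.HasExit f) :
    (∀ x : G.M, x ≠ 0 → ∃ y : G.M, y ≠ 0 ∧ x = x + y) ∧
    (∀ x y : G.M, x ≠ 0 → y ≠ 0 → x + y ≠ 0) ∧
    (∃ z : G.M, z ≠ 0 ∧ (∀ x : G.M, x ≠ 0 → x + z = x) ∧
      (∀ x : G.M, x ≠ 0 → ∃ w : G.M, w ≠ 0 ∧ x + w = z)) :=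
  stmt13_general G hcof hloop hexit
end

section
/- Let E be a row-finite directed graph. For every finite complete subgraph X of E, the assignment a_v ↦ a_v (v ∈ X⁰) induces a monoid homomorphism M_X → M_E, and: (i) every element of M_E lies in the image of M_X → M_E for some finite complete subgraph X of E; (ii) if two elements of M_X have the same image in M_E, then there is a finite complete subgraph Y of E containing X such that the two elements already have the same image in M_Y. -/
namespace RFGraph

/-- `(V', E')` is a subgraph of `G`. -/
def IsSubgraph (G : RFGraph) (V' : Set G.V) (E' : Set G.Edge) : Prop :=
  ∀ e ∈ E', G.s e ∈ V' ∧ G.r e ∈ V'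

/-- `(V', E')` is complete: any vertex of `V'` emitting at least one edge of `E'`
has all of its edges (in `G`) inside `E'`. -/
def IsCompleteSub (G : RFGraph) (V' : Set G.V) (E' : Set G.Edge) : Prop :=
  ∀ v ∈ V', (∃ e ∈ E', G.s e = v) → ∀ e : G.Edge, G.s e = v → e ∈ E'

end RFGraph

namespace RFGraph

/-- The row-finite graph determined by a subgraph `(V', E')` of `G`. -/
def subRF (G : RFGraph) (V' : Set G.V) (E' : Set G.Edge)
    (hsub : G.IsSubgraph V' E') : RFGraph where
  V := ↥V'
  Edge := ↥E'
  s := fun e => ⟨G.s e.1, (hsub e.1 e.2).1⟩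
  r := fun e => ⟨G.r e.1, (hsub e.1 e.2).2⟩
  rowFinite := fun v => by
    have h1 : (Subtype.val ⁻¹' {e : G.Edge | G.s e = v.1} : Set ↥E').Finite :=
      Set.Finite.preimage (Subtype.val_injective.injOn) (G.rowFinite v.1)
    exact h1.subset fun e he => congrArg Subtype.val he

end RFGraph

/-!
A relation `α ∼ β` in `F_E` is derived by finitely many moves `→₁`, each of which involves one
vertex together with its finitely many outgoing edges. A complete subgraph contains, with each
vertex it lets emit, all of that vertex's edges, so its inclusion carries `→₁` to `→₁` and induces
homomorphisms of graph monoids. As finite complete subgraphs form a directed family exhausting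
`E`, the whole derivation takes place inside one of them.
-/

namespace RFGraph

structure CompleteHom (A B : RFGraph) where
  toV : A.V → B.V
  toEdge : A.Edge → B.Edge
  s_toEdge : ∀ e, B.s (toEdge e) = toV (A.s e)
  r_toEdge : ∀ e, B.r (toEdge e) = toV (A.r e)
  bijOn_edges : ∀ v, A.emits v → Set.BijOn toEdge {e | A.s e = v} {e | B.s e = toV v}

namespace CompleteHom

variable {A B : RFGraph} (f : CompleteHom A B)

noncomputable def mapF : A.F →+ B.F := Finsupp.mapDomain.addMonoidHom f.toV

lemma mapF_apply (α : A.F) : f.mapF α = Finsupp.mapDomain f.toV α := rfl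

lemma mapF_single (v : A.V) (n : ℕ) : f.mapF (Finsupp.single v n) = Finsupp.single (f.toV v) n :=
  Finsupp.mapDomain_single

lemma emits_toV {v : A.V} (hv : A.emits v) : B.emits (f.toV v) :=
  let ⟨e, he⟩ := hv
  ⟨f.toEdge e, (f.bijOn_edges v hv).mapsTo he⟩

lemma mapF_rr {v : A.V} (hv : A.emits v) : f.mapF (A.rr v) = B.rr (f.toV v) := by
  have hbij := f.bijOn_edges v hv
  rw [← (A.rowFinite v).coe_toFinset, ← (B.rowFinite (f.toV v)).coe_toFinset] at hbij
  simp only [rr, map_sum, mapF_single]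
  exact Finset.sum_nbij f.toEdge (fun _ he => hbij.mapsTo he) hbij.injOn hbij.surjOn
    fun e _ => by rw [f.r_toEdge]

lemma step_mapF {α β : A.F} (h : A.step α β) : B.step (f.mapF α) (f.mapF β) := by
  obtain ⟨x, α', hx, rfl, rfl⟩ := h
  exact ⟨f.toV x, f.mapF α', f.emits_toV hx, by rw [map_add, mapF_single],
    by rw [map_add, f.mapF_rr hx]⟩

lemma graphCon_le_comap : A.graphCon ≤ B.graphCon.comap f.mapF (map_add f.mapF) :=
  AddCon.addConGen_le.mpr fun _ _ h => AddConGen.Rel.of _ _ (f.step_mapF h)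

lemma graphCon_mapF {α β : A.F} (h : A.graphCon α β) : B.graphCon (f.mapF α) (f.mapF β) :=
  f.graphCon_le_comap h

noncomputable def mapM : A.M →+ B.M :=
  A.graphCon.lift (B.graphCon.mk'.comp f.mapF) fun _ _ h => (AddCon.eq _).mpr (f.graphCon_mapF h)

lemma mapM_mk' (α : A.F) : f.mapM (A.graphCon.mk' α) = B.graphCon.mk' (f.mapF α) :=
  AddCon.lift_mk' _ _

lemma mapM_av (v : A.V) : f.mapM (A.av v) = B.av (f.toV v) := by
  rw [av, mapM_mk', mapF_single, av]

end CompleteHom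

lemma M.hom_ext {A : RFGraph} {N : Type*} [AddCommMonoid N] {φ ψ : A.M →+ N}
    (h : ∀ v, φ (A.av v) = ψ (A.av v)) : φ = ψ :=
  AddCon.hom_ext <| Finsupp.addHom_ext fun v n => by
    rw [AddMonoidHom.comp_apply, AddMonoidHom.comp_apply, ← Finsupp.smul_single_one]
    simp only [map_nsmul]
    exact congrArg (n • ·) (h v)

structure FinCompleteSub (G : RFGraph) where
  verts : Set G.V
  edges : Set G.Edge
  isSubgraph : G.IsSubgraph verts edges
  isComplete : G.IsCompleteSub verts edges
  finite_verts : verts.Finite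
  finite_edges : edges.Finite

namespace FinCompleteSub

variable {G : RFGraph}

instance : LE G.FinCompleteSub := ⟨fun X Y => X.verts ⊆ Y.verts ∧ X.edges ⊆ Y.edges⟩

abbrev graph (X : G.FinCompleteSub) : RFGraph := G.subRF X.verts X.edges X.isSubgraph

lemma mem_edges_of_emits (X : G.FinCompleteSub) {v : X.verts} (hv : X.graph.emits v)
    {e : G.Edge} (he : G.s e = v) : e ∈ X.edges :=
  let ⟨e₀, he₀⟩ := hv
  X.isComplete v v.2 ⟨e₀.1, e₀.2, congrArg Subtype.val he₀⟩ e he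

def toHom (X : G.FinCompleteSub) : CompleteHom X.graph G where
  toV := Subtype.val
  toEdge := Subtype.val
  s_toEdge _ := rfl
  r_toEdge _ := rfl
  bijOn_edges _ hv := ⟨fun _ he => congrArg Subtype.val he, Subtype.val_injective.injOn,
    fun e he => ⟨⟨e, X.mem_edges_of_emits hv he⟩, Subtype.ext he, rfl⟩⟩

def inclusion {X Y : G.FinCompleteSub} (h : X ≤ Y) : CompleteHom X.graph Y.graph where
  toV := Set.inclusion h.1
  toEdge := Set.inclusion h.2
  s_toEdge _ := rfl
  r_toEdge _ := rfl
  bijOn_edges _ hv := ⟨fun _ he => Subtype.ext <| (congrArg Subtype.val he :),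
    (Set.inclusion_injective h.2).injOn,
    fun e he => ⟨⟨e.1, X.mem_edges_of_emits hv <| (congrArg Subtype.val he :)⟩,
      Subtype.ext <| (congrArg Subtype.val he :), rfl⟩⟩

lemma toHom_mapF_injective (X : G.FinCompleteSub) : Function.Injective X.toHom.mapF :=
  Finsupp.mapDomain_injective Subtype.val_injective

lemma toHom_mapF_inclusion {X Y : G.FinCompleteSub} (h : X ≤ Y) (α : X.graph.F) :
    Y.toHom.mapF ((inclusion h).mapF α) = X.toHom.mapF α := by
  simp only [CompleteHom.mapF_apply, ← Finsupp.mapDomain_comp]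
  rfl

lemma exists_toHom_mapF_eq (X : G.FinCompleteSub) {α : G.F} (hα : ↑α.support ⊆ X.verts) :
    ∃ α' : X.graph.F, X.toHom.mapF α' = α := by
  classical
  refine ⟨α.subtypeDomain (· ∈ X.verts), ?_⟩
  have h := Finsupp.extendDomain_subtypeDomain α fun a ha => hα ha
  rwa [Finsupp.extendDomain_eq_embDomain_subtype, Finsupp.embDomain_eq_mapDomain] at h

lemma exists_superset (W : Set G.V) (F : Set G.Edge) (hW : W.Finite) (hF : F.Finite) :
    ∃ X : G.FinCompleteSub, W ⊆ X.verts ∧ F ⊆ X.edges := by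
  set F' : Set G.Edge := {e | ∃ f ∈ F, G.s e = G.s f}
  have hF' : F'.Finite := by
    have : F' = ⋃ f ∈ F, {e | G.s e = G.s f} := by
      ext e; simp [F', Set.mem_iUnion]
    rw [this]
    exact hF.biUnion fun f _ => G.rowFinite (G.s f)
  refine ⟨⟨W ∪ G.s '' F' ∪ G.r '' F', F', ?_, ?_, ?_, hF'⟩,
    fun v hv => Or.inl (Or.inl hv), fun e he => ⟨e, he, rfl⟩⟩
  · exact fun e he => ⟨Or.inl (Or.inr ⟨e, he, rfl⟩), Or.inr ⟨e, he, rfl⟩⟩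
  · rintro v _ ⟨e, ⟨f, hf, hef⟩, rfl⟩ e' he'
    exact ⟨f, hf, he'.trans hef⟩
  · exact (hW.union (hF'.image G.s)).union (hF'.image G.r)

lemma exists_ge_ge (X Y : G.FinCompleteSub) : ∃ Z : G.FinCompleteSub, X ≤ Z ∧ Y ≤ Z := by
  obtain ⟨Z, hV, hE⟩ := exists_superset _ _ (X.finite_verts.union Y.finite_verts)
    (X.finite_edges.union Y.finite_edges)
  exact ⟨Z, ⟨Set.subset_union_left.trans hV, Set.subset_union_left.trans hE⟩,
    ⟨Set.subset_union_right.trans hV, Set.subset_union_right.trans hE⟩⟩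

def RelIn (X : G.FinCompleteSub) (α β : G.F) : Prop :=
  ∃ α' β' : X.graph.F, X.toHom.mapF α' = α ∧ X.toHom.mapF β' = β ∧ X.graph.graphCon α' β'

namespace RelIn

variable {X Y : G.FinCompleteSub} {α β γ δ : G.F}

lemma graphCon (h : X.RelIn α β) {α' β' : X.graph.F} (hα : X.toHom.mapF α' = α)
    (hβ : X.toHom.mapF β' = β) : X.graph.graphCon α' β' := by
  obtain ⟨a, b, ha, hb, hab⟩ := h
  rwa [X.toHom_mapF_injective (ha.trans hα.symm), X.toHom_mapF_injective (hb.trans hβ.symm)]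
    at hab

lemma mono (h : X.RelIn α β) (hXY : X ≤ Y) : Y.RelIn α β :=
  let ⟨a, b, ha, hb, hab⟩ := h
  ⟨_, _, (toHom_mapF_inclusion hXY a).trans ha, (toHom_mapF_inclusion hXY b).trans hb,
    (inclusion hXY).graphCon_mapF hab⟩

lemma symm (h : X.RelIn α β) : X.RelIn β α :=
  let ⟨a, b, ha, hb, hab⟩ := h
  ⟨b, a, hb, ha, X.graph.graphCon.symm hab⟩

lemma trans (h₁ : X.RelIn α β) (h₂ : X.RelIn β γ) : X.RelIn α γ :=
  let ⟨a, _, ha, hb, hab⟩ := h₁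
  let ⟨_, c, _, hc, _⟩ := h₂
  ⟨a, c, ha, hc, X.graph.graphCon.trans hab (h₂.graphCon hb hc)⟩

lemma add (h₁ : X.RelIn α β) (h₂ : X.RelIn γ δ) : X.RelIn (α + γ) (β + δ) :=
  let ⟨a, b, ha, hb, hab⟩ := h₁
  let ⟨c, d, hc, hd, hcd⟩ := h₂
  ⟨a + c, b + d, by rw [map_add, ha, hc], by rw [map_add, hb, hd], X.graph.graphCon.add hab hcd⟩

end RelIn

lemma exists_relIn_self (α : G.F) : ∃ X : G.FinCompleteSub, X.RelIn α α := by
  obtain ⟨X, hV, -⟩ := exists_superset _ ∅ α.support.finite_toSet Set.finite_empty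
  obtain ⟨a, ha⟩ := X.exists_toHom_mapF_eq hV
  exact ⟨X, a, a, ha, ha, X.graph.graphCon.refl a⟩

lemma exists_relIn_of_step {α β : G.F} (h : G.step α β) :
    ∃ X : G.FinCompleteSub, X.RelIn α β := by
  obtain ⟨v, α', ⟨e, he⟩, rfl, rfl⟩ := h
  obtain ⟨X, hV, hE⟩ := exists_superset (insert v α'.support) {e}
    (α'.support.finite_toSet.insert v) (Set.finite_singleton e)
  obtain ⟨a', ha'⟩ := X.exists_toHom_mapF_eq ((Set.subset_insert _ _).trans hV)
  let x : X.verts := ⟨v, hV (Set.mem_insert _ _)⟩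
  have hx : X.graph.emits x := ⟨⟨e, hE rfl⟩, Subtype.ext he⟩
  refine ⟨X, (Finsupp.single x 1 : X.graph.F) + a', X.graph.rr x + a', ?_, ?_,
    AddConGen.Rel.of _ _ ⟨x, a', hx, rfl, rfl⟩⟩
  · rw [map_add, ha']
    exact congrArg (· + α') (X.toHom.mapF_single x 1)
  · rw [map_add, X.toHom.mapF_rr hx, ha']
    rfl

lemma exists_relIn_of_graphCon {α β : G.F} (h : G.graphCon α β) :
    ∃ X : G.FinCompleteSub, X.RelIn α β := by
  induction h with
  | of _ _ h => exact exists_relIn_of_step h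
  | refl α => exact exists_relIn_self α
  | symm _ ih =>
    obtain ⟨X, h⟩ := ih
    exact ⟨X, h.symm⟩
  | trans _ _ ih₁ ih₂ =>
    obtain ⟨X, h₁⟩ := ih₁
    obtain ⟨Y, h₂⟩ := ih₂
    obtain ⟨Z, hXZ, hYZ⟩ := exists_ge_ge X Y
    exact ⟨Z, (h₁.mono hXZ).trans (h₂.mono hYZ)⟩
  | add _ _ ih₁ ih₂ =>
    obtain ⟨X, h₁⟩ := ih₁
    obtain ⟨Y, h₂⟩ := ih₂
    obtain ⟨Z, hXZ, hYZ⟩ := exists_ge_ge X Y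
    exact ⟨Z, (h₁.mono hXZ).add (h₂.mono hYZ)⟩

lemma exists_mem_range_mapM (x : G.M) : ∃ X : G.FinCompleteSub, x ∈ Set.range X.toHom.mapM := by
  obtain ⟨α, rfl⟩ := G.graphCon.mk'_surjective x
  obtain ⟨X, a, -, ha, -, -⟩ := exists_relIn_self α
  exact ⟨X, X.graph.graphCon.mk' a, by rw [CompleteHom.mapM_mk', ha]⟩

lemma exists_inclusion_mapM_eq {X : G.FinCompleteSub} {m₁ m₂ : X.graph.M}
    (h : X.toHom.mapM m₁ = X.toHom.mapM m₂) :
    ∃ (Y : G.FinCompleteSub) (hXY : X ≤ Y),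
      (inclusion hXY).mapM m₁ = (inclusion hXY).mapM m₂ := by
  obtain ⟨a₁, rfl⟩ := X.graph.graphCon.mk'_surjective m₁
  obtain ⟨a₂, rfl⟩ := X.graph.graphCon.mk'_surjective m₂
  rw [CompleteHom.mapM_mk', CompleteHom.mapM_mk'] at h
  obtain ⟨Y, hY⟩ := exists_relIn_of_graphCon ((AddCon.eq _).mp h)
  obtain ⟨Z, hXZ, hYZ⟩ := exists_ge_ge X Y
  refine ⟨Z, hXZ, ?_⟩
  rw [CompleteHom.mapM_mk', CompleteHom.mapM_mk']
  exact (AddCon.eq _).mpr <|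
    (hY.mono hYZ).graphCon (toHom_mapF_inclusion hXZ a₁) (toHom_mapF_inclusion hXZ a₂)

end FinCompleteSub

end RFGraph

/-- For a finite complete subgraph `X` of a row-finite graph `E`,
`a_v ↦ a_v` induces a monoid homomorphism `M_X → M_E`; (i) every element of
`M_E` is in the image of such a map for some finite complete subgraph; (ii) two
elements of `M_X` with equal images in `M_E` already have equal images in `M_Y`
for some finite complete subgraph `Y ⊇ X`. -/
theorem stmt15 (G : RFGraph) (V' : Set G.V) (E' : Set G.Edge)
    (hsub : G.IsSubgraph V' E') (hcomp : G.IsCompleteSub V' E')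
    (hVf : V'.Finite) (hEf : E'.Finite) :
    (∃ φ : (G.subRF V' E' hsub).M →+ G.M,
        ∀ v : ↥V', φ ((G.subRF V' E' hsub).av v) = G.av v.1) ∧
    (∀ x : G.M, ∃ (W' : Set G.V) (F' : Set G.Edge) (h : G.IsSubgraph W' F'),
        G.IsCompleteSub W' F' ∧ W'.Finite ∧ F'.Finite ∧
        ∃ φ : (G.subRF W' F' h).M →+ G.M,
          (∀ v : ↥W', φ ((G.subRF W' F' h).av v) = G.av v.1) ∧ x ∈ Set.range φ) ∧
    (∀ φ : (G.subRF V' E' hsub).M →+ G.M,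
        (∀ v : ↥V', φ ((G.subRF V' E' hsub).av v) = G.av v.1) →
        ∀ m₁ m₂ : (G.subRF V' E' hsub).M, φ m₁ = φ m₂ →
        ∃ (W' : Set G.V) (F' : Set G.Edge) (h : G.IsSubgraph W' F'),
          G.IsCompleteSub W' F' ∧ W'.Finite ∧ F'.Finite ∧ V' ⊆ W' ∧ E' ⊆ F' ∧
          ∃ ψ : (G.subRF V' E' hsub).M →+ (G.subRF W' F' h).M,
            (∀ (v : ↥V') (hv : v.1 ∈ W'),
              ψ ((G.subRF V' E' hsub).av v) = (G.subRF W' F' h).av ⟨v.1, hv⟩) ∧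
            ψ m₁ = ψ m₂) := by
  let X : G.FinCompleteSub := ⟨V', E', hsub, hcomp, hVf, hEf⟩
  refine ⟨⟨X.toHom.mapM, X.toHom.mapM_av⟩, fun x => ?_, fun φ hφ m₁ m₂ hm => ?_⟩
  · obtain ⟨Y, hY⟩ := RFGraph.FinCompleteSub.exists_mem_range_mapM x
    exact ⟨Y.verts, Y.edges, Y.isSubgraph, Y.isComplete, Y.finite_verts, Y.finite_edges,
      Y.toHom.mapM, Y.toHom.mapM_av, hY⟩
  · obtain rfl : φ = X.toHom.mapM :=
      RFGraph.M.hom_ext fun v => (hφ v).trans (X.toHom.mapM_av v).symm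
    obtain ⟨Y, hXY, hY⟩ := RFGraph.FinCompleteSub.exists_inclusion_mapM_eq hm
    exact ⟨Y.verts, Y.edges, Y.isSubgraph, Y.isComplete, Y.finite_verts, Y.finite_edges,
      hXY.1, hXY.2, _, fun v _ => (RFGraph.FinCompleteSub.inclusion hXY).mapM_av v, hY⟩
end
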